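/- Let β ∈ ℝ \ {μ_1, …, μ_n} and suppose α_1, …, α_n are positive real numbers satisfying μ_j·α_j² + β·∑_{k ≠ j} α_k² = −1 for every j = 1, …, n. Then (β − μ_j)·g(β) > 0 and α_j = ((β − μ_j)·g(β))^{−1/2} for every j = 1, …, n; in particular the α_j are uniquely determined by β. -/

import Mathlib

open Set Finset

/-!
Put `w k = α k ^ 2` and `c = 1 + β ∑ₖ wₖ`. The `j`-th equation says `wⱼ (β - μⱼ) = c`, so
`c / (μⱼ - β) = -wⱼ`; summing gives `g(β) c = c - β ∑ₖ wₖ = 1`. Hence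
`(β - μⱼ) g(β) = wⱼ (β - μⱼ) g(β) / wⱼ = 1 / αⱼ²`.
-/

section SecularEquation

variable {ι : Type*} [Fintype ι] {μ w : ι → ℝ} {β : ℝ}

lemma mul_sub_eq_one_add_mul_sum [DecidableEq ι]
    (h : ∀ j, μ j * w j + β * ∑ k ∈ univ.erase j, w k = -1) (j : ι) :
    w j * (β - μ j) = 1 + β * ∑ k, w k := by
  have hj := h j
  rw [sum_erase_eq_sub (mem_univ j)] at hj
  linarith

lemma one_add_mul_sum_inv_mul_eq_one (hβ : ∀ i, β ≠ μ i)
    (h : ∀ i, w i * (β - μ i) = 1 + β * ∑ k, w k) :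
    (1 + β * ∑ i, 1 / (μ i - β)) * (1 + β * ∑ k, w k) = 1 := by
  have hterm : ∀ i, 1 / (μ i - β) * (1 + β * ∑ k, w k) = -w i := fun i => by
    have hμβ : μ i - β ≠ 0 := sub_ne_zero.mpr (hβ i).symm
    rw [← h i, one_div_mul_eq_div, div_eq_iff hμβ]
    ring
  rw [add_mul, one_mul, mul_assoc, sum_mul, sum_congr rfl fun i _ => hterm i, sum_neg_distrib]
  ring

end SecularEquation

lemma pos_and_eq_inv_sqrt_of_mul_sq_eq_one {x a : ℝ} (ha : 0 < a) (h : x * a ^ 2 = 1) :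
    0 < x ∧ a = (Real.sqrt x)⁻¹ := by
  have hx : x = (a ^ 2)⁻¹ := eq_inv_of_mul_eq_one_left h
  subst hx
  refine ⟨by positivity, ?_⟩
  rw [Real.sqrt_inv, Real.sqrt_sq ha.le, inv_inv]

theorem synchronized_coefficients_unique (n : ℕ) (μ : Fin n → ℝ)
    (g : ℝ → ℝ)
    (hg : ∀ β : ℝ, (∀ j, β ≠ μ j) → g β = 1 + β * ∑ j, 1 / (μ j - β))
    (β : ℝ) (hβ : ∀ j, β ≠ μ j)
    (α : Fin n → ℝ) (hαpos : ∀ j, 0 < α j)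
    (heq : ∀ j, μ j * (α j) ^ 2 + β * ∑ k ∈ Finset.univ.erase j, (α k) ^ 2 = -1) :
    ∀ j, 0 < (β - μ j) * g β ∧ α j = (Real.sqrt ((β - μ j) * g β))⁻¹ := by
  intro j
  have hw := mul_sub_eq_one_add_mul_sum heq
  have hgc := one_add_mul_sum_inv_mul_eq_one hβ hw
  rw [← hg β hβ] at hgc
  refine pos_and_eq_inv_sqrt_of_mul_sq_eq_one (hαpos j) ?_
  calc (β - μ j) * g β * α j ^ 2 = g β * (α j ^ 2 * (β - μ j)) := by ring
    _ = 1 := by rw [hw j, hgc]
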